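/- arXiv:2506.18409 — 7 statements merged into one kernel-verified Lean document; each statement's English description precedes it below -/
import Mathlib

section
/- Let u : ℕ → ℝ with u ∈ Λ. Then Δˢ_u ≠ ∅ if and only if there exists k ∈ ℕ with u_k > L(u). -/
open Set Filter

/-- `V u` is the supremum of the sequence `u` (real `sSup`, junk value if unbounded). -/
noncomputable def V (u : ℕ → ℝ) : ℝ := sSup (Set.range u)

/-- `L u` is the limit superior of `u` taken in the extended reals. -/
noncomputable def L (u : ℕ → ℝ) : EReal :=
  Filter.limsup (fun n => ((u n : ℝ) : EReal)) Filter.atTop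

/-- `u ∈ Λ` : the supremum of `u` is finite, i.e. `u` is bounded above. -/
def MemLambda (u : ℕ → ℝ) : Prop := BddAbove (Set.range u)

/-- `Δ_u = {k : max_{0 ≤ j ≤ k} u_j ≥ sup_{j > k} u_j}`. -/
noncomputable def Delta (u : ℕ → ℝ) : Set ℕ :=
  {k | sSup (u '' Set.Ioi k) ≤ sSup (u '' Set.Iic k)}

/-- `Δˢ_u = {k : max_{0 ≤ j ≤ k} u_j > sup_{j > k} u_j}`. -/
noncomputable def DeltaS (u : ℕ → ℝ) : Set ℕ :=
  {k | sSup (u '' Set.Ioi k) < sSup (u '' Set.Iic k)}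

/-- `Argmax u = {k : u k = V u}`. -/
noncomputable def Argmax (u : ℕ → ℝ) : Set ℕ := {k | u k = V u}

/-!
A point of `Δˢ_u` forces the maximum of an initial segment, which is attained by some term, above
the supremum of the tail, and that supremum bounds the limsup. Conversely, a real `a` strictly
between `L u` and `u k` eventually bounds the sequence, so at any index past both that point and
`k` the tail supremum is at most `a` while the initial maximum is at least `u k`.
-/

section SupremaOfImages

variable {α : Type*} [ConditionallyCompleteLinearOrder α] (u : ℕ → α)

lemma exists_eq_sSup_image_Iic (k : ℕ) : ∃ m, u m = sSup (u '' Iic k) := by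
  obtain ⟨m, -, hm⟩ := (nonempty_Iic.image u).csSup_mem ((finite_Iic k).image u)
  exact ⟨m, hm⟩

lemma le_sSup_image_Iic {j k : ℕ} (hjk : j ≤ k) : u j ≤ sSup (u '' Iic k) :=
  le_csSup ((finite_Iic k).image u).bddAbove (mem_image_of_mem u hjk)

lemma sSup_image_Ioi_le {a : α} {N k : ℕ} (hNk : N ≤ k) (h : ∀ j ≥ N, u j ≤ a) :
    sSup (u '' Ioi k) ≤ a :=
  csSup_le (nonempty_Ioi.image u) (forall_mem_image.2 fun j hj => h j (hNk.trans hj.le))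

end SupremaOfImages

lemma L_le_sSup_image_Ioi {u : ℕ → ℝ} (hu : MemLambda u) (k : ℕ) :
    L u ≤ ((sSup (u '' Ioi k) : ℝ) : EReal) :=
  limsup_le_of_le (by isBoundedDefault) <| (eventually_gt_atTop k).mono fun _ hj =>
    EReal.coe_le_coe_iff.2 (le_csSup (hu.mono (image_subset_range u _)) (mem_image_of_mem u hj))

/-- for u ∈ Λ, Δˢ_u ≠ ∅ iff some term of u is strictly above the limsup. -/
theorem deltaS_nonempty_iff (u : ℕ → ℝ) (hu : MemLambda u) :
    (DeltaS u).Nonempty ↔ ∃ k : ℕ, L u < ((u k : ℝ) : EReal) := by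
  constructor
  · rintro ⟨k, hk⟩
    obtain ⟨m, hm⟩ := exists_eq_sSup_image_Iic u k
    refine ⟨m, (L_le_sSup_image_Ioi hu k).trans_lt ?_⟩
    rw [hm]
    exact_mod_cast hk
  · rintro ⟨k, hk⟩
    obtain ⟨a, hLa, hak⟩ := EReal.lt_iff_exists_real_btwn.1 hk
    obtain ⟨N, hN⟩ := (eventually_lt_of_limsup_lt hLa).exists_forall_of_atTop
    refine ⟨max N k, ?_⟩
    calc sSup (u '' Ioi (max N k))
        ≤ a := sSup_image_Ioi_le u (le_max_left N k) fun j hj => by exact_mod_cast (hN j hj).le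
      _ < u k := by exact_mod_cast hak
      _ ≤ sSup (u '' Iic (max N k)) := le_sSup_image_Iic u (le_max_right N k)
end

section
/- Let u : ℕ → ℝ with u ∈ Λ. Then Δˢ_u = ∅ if and only if V(u) = L(u) (equality of the finite supremum with the limit superior taken in the extended reals). -/
open Set Filter

/-
For bounded `u` and every `k`, `V u = max (headSup u k) (tailSup u k)`, so `Δˢ_u = ∅` says exactly
that every tail supremum `tailSup u k` reaches `V u`. Since `L u = ⨅ k, tailSup u k` and
`tailSup u k ≤ V u`, this is in turn the same as `L u = V u`.
-/

namespace Lambda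

noncomputable def headSup (u : ℕ → ℝ) (k : ℕ) : ℝ := sSup (u '' Iic k)

noncomputable def tailSup (u : ℕ → ℝ) (k : ℕ) : ℝ := sSup (u '' Ioi k)

variable {u : ℕ → ℝ}

lemma tailSup_nonempty (u : ℕ → ℝ) (k : ℕ) : (u '' Ioi k).Nonempty :=
  ⟨u (k + 1), mem_image_of_mem u (lt_add_one k)⟩

lemma V_eq_max_headSup_tailSup (hu : BddAbove (range u)) (k : ℕ) :
    V u = max (headSup u k) (tailSup u k) := by
  have hrange : range u = u '' Iic k ∪ u '' Ioi k := by
    rw [← image_union, Iic_union_Ioi, image_univ]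
  rw [V, hrange, csSup_union (hu.mono (image_subset_range u _)) ⟨u k, mem_image_of_mem u self_mem_Iic⟩
    (hu.mono (image_subset_range u _)) (tailSup_nonempty u k)]
  rfl

lemma tailSup_le_V (hu : BddAbove (range u)) (k : ℕ) : tailSup u k ≤ V u :=
  (V_eq_max_headSup_tailSup hu k).symm ▸ le_max_right _ _

lemma deltaS_eq_empty_iff_forall_V_le_tailSup (hu : BddAbove (range u)) :
    DeltaS u = ∅ ↔ ∀ k, V u ≤ tailSup u k := by
  simp only [eq_empty_iff_forall_notMem, DeltaS, mem_ofPred_eq, not_lt]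
  refine forall_congr' fun k => ?_
  rw [V_eq_max_headSup_tailSup hu k, max_le_iff, and_iff_left le_rfl]
  rfl

lemma L_le_tailSup (hu : BddAbove (range u)) (k : ℕ) : L u ≤ tailSup u k := by
  refine limsup_le_of_le isCobounded_le_of_bot (eventually_atTop.2 ⟨k + 1, fun n hn => ?_⟩)
  exact EReal.coe_le_coe_iff.2 <|
    le_csSup (hu.mono (image_subset_range u _)) (mem_image_of_mem u (Nat.lt_of_succ_le hn))

lemma le_L_of_forall_le_tailSup {c : ℝ} (h : ∀ k, c ≤ tailSup u k) : (c : EReal) ≤ L u := by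
  refine le_of_forall_lt fun b hb => ?_
  obtain ⟨r, hbr, hrc⟩ := EReal.lt_iff_exists_real_btwn.1 hb
  have hfreq : ∃ᶠ n in atTop, (r : EReal) ≤ u n := by
    refine frequently_atTop.2 fun k => ?_
    obtain ⟨_, ⟨n, hn, rfl⟩, hrn⟩ :=
      exists_lt_of_lt_csSup (tailSup_nonempty u k) ((EReal.coe_lt_coe_iff.1 hrc).trans_le (h k))
    exact ⟨n, hn.le, EReal.coe_le_coe_iff.2 hrn.le⟩
  exact hbr.trans_le (le_limsup_of_frequently_le hfreq)

lemma V_eq_L_iff_forall_V_le_tailSup (hu : BddAbove (range u)) :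
    (V u : EReal) = L u ↔ ∀ k, V u ≤ tailSup u k := by
  refine ⟨fun h k => EReal.coe_le_coe_iff.1 (h ▸ L_le_tailSup hu k), fun h => ?_⟩
  exact le_antisymm (le_L_of_forall_le_tailSup h)
    ((L_le_tailSup hu 0).trans (EReal.coe_le_coe_iff.2 (tailSup_le_V hu 0)))

end Lambda

open Lambda in
/-- for u ∈ Λ, Δˢ_u = ∅ iff the supremum equals the limsup. -/
theorem deltaS_empty_iff (u : ℕ → ℝ) (hu : MemLambda u) :
    DeltaS u = ∅ ↔ ((V u : ℝ) : EReal) = L u :=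
  (deltaS_eq_empty_iff_forall_V_le_tailSup hu).trans (V_eq_L_iff_forall_V_le_tailSup hu).symm
end

section
/- Let u : ℕ → ℝ with u ∈ Λ and suppose Δˢ_u ≠ ∅. Then the least element K of Δˢ_u is the greatest element of Argmax(u): K ∈ Argmax(u) and every k ∈ Argmax(u) satisfies k ≤ K. -/
open Set Filter

/-!
A point `k` lies in `Δˢ_u` exactly when some maximiser of `u` sits at or before `k` and the
supremum of the tail beyond `k` is below `V u`. So every maximiser is at most `K = min Δˢ_u`, and
`Argmax u` has a greatest element `m ≤ K`. Conversely `m ∈ Δˢ_u`: the finitely many terms in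
`(m, K]` are not maximisers, hence below `V u`, and beyond `K` the supremum is already below
`V u`. Minimality of `K` gives `K = m`.
-/

section

variable {u : ℕ → ℝ}

theorem MemLambda.bddAbove_image (hu : MemLambda u) (s : Set ℕ) : BddAbove (u '' s) :=
  hu.mono (image_subset_range u s)

theorem MemLambda.le_sSup_image (hu : MemLambda u) {s : Set ℕ} {n : ℕ} (hn : n ∈ s) :
    u n ≤ sSup (u '' s) :=
  le_csSup (hu.bddAbove_image s) (mem_image_of_mem u hn)

theorem MemLambda.le_V (hu : MemLambda u) (n : ℕ) : u n ≤ V u :=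
  le_csSup hu (mem_range_self n)

theorem MemLambda.sSup_image_le_V (hu : MemLambda u) {s : Set ℕ} (hs : s.Nonempty) :
    sSup (u '' s) ≤ V u :=
  csSup_le_csSup hu (hs.image u) (image_subset_range u s)

theorem mem_deltaS_iff (hu : MemLambda u) {k : ℕ} :
    k ∈ DeltaS u ↔ (∃ i ≤ k, i ∈ Argmax u) ∧ sSup (u '' Ioi k) < V u := by
  have hIic : (Iic k).Nonempty := nonempty_Iic
  constructor
  · intro hk
    have hhead_le : sSup (u '' Iic k) ≤ V u := hu.sSup_image_le_V hIic
    have hV_le_head : V u ≤ sSup (u '' Iic k) := by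
      refine csSup_le (range_nonempty u) ?_
      rintro _ ⟨n, rfl⟩
      rcases le_or_gt n k with hn | hn
      · exact hu.le_sSup_image (mem_Iic.mpr hn)
      · exact (hu.le_sSup_image (mem_Ioi.mpr hn)).trans hk.le
    obtain ⟨i, hik, hi⟩ := (hIic.image u).csSup_mem ((finite_Iic k).image u)
    exact ⟨⟨i, hik, hi.trans (le_antisymm hhead_le hV_le_head)⟩, hk.trans_le hhead_le⟩
  · rintro ⟨⟨i, hik, hi⟩, htail⟩
    calc sSup (u '' Ioi k) < V u := htail
      _ = u i := hi.symm
      _ ≤ sSup (u '' Iic k) := hu.le_sSup_image (mem_Iic.mpr hik)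

theorem le_of_mem_argmax_of_mem_deltaS (hu : MemLambda u) {j k : ℕ} (hk : k ∈ DeltaS u)
    (hj : j ∈ Argmax u) : j ≤ k := by
  by_contra! hkj
  have := hu.le_sSup_image (mem_Ioi.mpr hkj)
  rw [hj] at this
  exact this.not_gt ((mem_deltaS_iff hu).1 hk).2

theorem sSup_image_Ioi_lt_of_lt {m k : ℕ} {c : ℝ} (hbdd : BddAbove (u '' Ioi k))
    (hk : sSup (u '' Ioi k) < c) (hmk : m < k) (hmid : ∀ n ∈ Ioc m k, u n < c) :
    sSup (u '' Ioi m) < c := by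
  obtain ⟨n, hn, hn_max⟩ :=
    (Ioc m k).exists_max_image u (finite_Ioc m k) ⟨k, hmk, le_rfl⟩
  refine lt_of_le_of_lt (b := max (u n) (sSup (u '' Ioi k))) ?_ (max_lt (hmid n hn) hk)
  refine csSup_le ((nonempty_Ioi (a := m)).image u) ?_
  rintro _ ⟨j, hj, rfl⟩
  rcases le_or_gt j k with hjk | hjk
  · exact le_max_of_le_left (hn_max j ⟨hj, hjk⟩)
  · exact le_max_of_le_right (le_csSup hbdd (mem_image_of_mem u hjk))

theorem mem_deltaS_of_isGreatest_argmax (hu : MemLambda u) {m k : ℕ}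
    (hm : IsGreatest (Argmax u) m) (hk : k ∈ DeltaS u) : m ∈ DeltaS u := by
  rcases (le_of_mem_argmax_of_mem_deltaS hu hk hm.1).lt_or_eq with hmk | rfl
  · have hmid : ∀ n ∈ Ioc m k, u n < V u := fun n hn =>
      (hu.le_V n).lt_of_ne fun hn_max => hn.1.not_ge (hm.2 hn_max)
    refine (mem_deltaS_iff hu).2 ⟨⟨m, le_rfl, hm.1⟩, ?_⟩
    exact sSup_image_Ioi_lt_of_lt (hu.bddAbove_image _) ((mem_deltaS_iff hu).1 hk).2 hmk hmid
  · exact hk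

end

/-- for u ∈ Λ with Δˢ_u ≠ ∅, the least element of Δˢ_u is the greatest
element of Argmax u. -/
theorem sInf_deltaS_eq_max_argmax (u : ℕ → ℝ) (hu : MemLambda u)
    (hne : (DeltaS u).Nonempty) :
    sInf (DeltaS u) ∈ Argmax u ∧ ∀ k ∈ Argmax u, k ≤ sInf (DeltaS u) := by
  have hK : sInf (DeltaS u) ∈ DeltaS u := Nat.sInf_mem hne
  have hbdd : BddAbove (Argmax u) :=
    ⟨_, fun _ => le_of_mem_argmax_of_mem_deltaS hu hK⟩
  obtain ⟨i, -, hi⟩ := ((mem_deltaS_iff hu).1 hK).1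
  obtain ⟨m, hm⟩ := hbdd.exists_isGreatest_of_nonempty ⟨i, hi⟩
  have hKm : sInf (DeltaS u) = m :=
    le_antisymm (Nat.sInf_le (mem_deltaS_of_isGreatest_argmax hu hm hK))
      (le_of_mem_argmax_of_mem_deltaS hu hK hm.1)
  rw [hKm]
  exact ⟨hm.1, fun _ hk => hm.2 hk⟩
end

section
/- Let u : ℕ → ℝ with u ∈ Λ and suppose there exists k₀ with u_{k₀} > L(u). Let K be the greatest element of Argmax(u) (which exists under these hypotheses). Then there exist a > 0, b ∈ (0,1) and c ∈ ℝ such that: (1) there exists k ∈ ℕ with u_k > c; (2) u_k ≤ a·b^k + c for all k ∈ ℕ; (3) u_K = a·b^K + c. -/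
open Set Filter

/-- Ω([0,1]): functions ℝ → ℝ strictly increasing and continuous on [0,1]. -/
def OmegaFun (f : ℝ → ℝ) : Prop :=
  StrictMonoOn f (Set.Icc 0 1) ∧ ContinuousOn f (Set.Icc 0 1)

/-- (h,β) ∈ Γ(u): h k ∈ Ω([0,1]), β k ∈ (0,1) and u k ≤ h k (β k ^ k) for all k. -/
def InGamma (u : ℕ → ℝ) (h : ℕ → ℝ → ℝ) (β : ℕ → ℝ) : Prop :=
  (∀ k, OmegaFun (h k)) ∧ (∀ k, β k ∈ Set.Ioo (0:ℝ) 1) ∧ (∀ k, u k ≤ h k (β k ^ k))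

/-- (h,β) is decreasing from N. -/
def DecreasingFrom (h : ℕ → ℝ → ℝ) (β : ℕ → ℝ) (N : ℕ) : Prop :=
  ∀ n, N ≤ n → (∀ x ∈ Set.Icc (0:ℝ) 1, h (n+1) x ≤ h n x) ∧ β (n+1) ≤ β n

/-- existence of a useful optimal affine upper bound. -/
theorem exists_useful_optimal_affine (u : ℕ → ℝ) (hu : MemLambda u)
    (hgt : ∃ k₀ : ℕ, L u < ((u k₀ : ℝ) : EReal))
    (K : ℕ) (hK : K ∈ Argmax u) (hKmax : ∀ k ∈ Argmax u, k ≤ K) :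
    ∃ a : ℝ, 0 < a ∧ ∃ b ∈ Set.Ioo (0:ℝ) 1, ∃ c : ℝ,
      (∃ k : ℕ, c < u k) ∧
      (∀ k : ℕ, u k ≤ a * b ^ k + c) ∧
      u K = a * b ^ K + c := by
  classical
  obtain ⟨k₀, hk₀⟩ := hgt
  have hV : ∀ k, u k ≤ V u := fun k => le_csSup hu ⟨k, rfl⟩
  -- find real r with L u < r < V u
  obtain ⟨z, hz1, hz2⟩ := exists_between hk₀
  have hzt : z ≠ ⊤ := ne_top_of_lt hz2
  have hzb : z ≠ ⊥ := by
    intro h; rw [h] at hz1; exact (not_lt_bot hz1).elim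
  lift z to ℝ using ⟨hzt, hzb⟩ with r
  have hrV : r < V u := lt_of_lt_of_le (by exact_mod_cast hz2) (hV k₀)
  -- eventually u n < r
  have hev : ∀ᶠ n in atTop, ((u n : ℝ) : EReal) < (r : EReal) :=
    Filter.eventually_lt_of_limsup_lt hz1
  obtain ⟨N, hN⟩ := Filter.eventually_atTop.1 hev
  have hN' : ∀ n ≥ N, u n ≤ r := fun n hn => by
    have := hN n hn; exact_mod_cast this.le
  -- define c
  set S : Finset ℝ := insert r ((Finset.Ioc K N).image u) with hS
  have hSne : S.Nonempty := ⟨r, Finset.mem_insert_self _ _⟩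
  set c : ℝ := S.max' hSne with hc
  have hrc : r ≤ c := Finset.le_max' _ _ (Finset.mem_insert_self _ _)
  have hcV : c < V u := by
    apply (Finset.max'_lt_iff _ hSne).2
    intro y hy
    rcases Finset.mem_insert.1 hy with h | h
    · subst h; exact hrV
    · obtain ⟨k, hk, rfl⟩ := Finset.mem_image.1 h
      rcases lt_or_eq_of_le (hV k) with h' | h'
      · exact h'
      · exact absurd (hKmax k h') (not_le.2 (Finset.mem_Ioc.1 hk).1)
  have hgtK : ∀ k, K < k → u k ≤ c := by
    intro k hk
    rcases le_or_gt k N with h | h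
    · exact Finset.le_max' _ _ (Finset.mem_insert_of_mem
        (Finset.mem_image.2 ⟨k, Finset.mem_Ioc.2 ⟨hk, h⟩, rfl⟩))
    · exact le_trans (hN' k h.le) hrc
  have hA : 0 < (V u - c) * 2 ^ K :=
    mul_pos (sub_pos.2 hcV) (pow_pos (by norm_num) K)
  refine ⟨(V u - c) * 2 ^ K, hA, 1/2, ⟨by norm_num, by norm_num⟩, c, ⟨K, ?_⟩, ?_, ?_⟩
  · rw [hK]; exact hcV
  · intro k
    have key : (V u - c) * 2 ^ K * (1/2 : ℝ) ^ K + c = V u := by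
      rw [mul_assoc, ← mul_pow]; norm_num
    rcases le_or_gt k K with h | h
    · calc u k ≤ V u := hV k
        _ = (V u - c) * 2 ^ K * (1/2 : ℝ) ^ K + c := key.symm
        _ ≤ (V u - c) * 2 ^ K * (1/2 : ℝ) ^ k + c := by
            have : ((1:ℝ)/2) ^ K ≤ (1/2 : ℝ) ^ k :=
              pow_le_pow_of_le_one (by norm_num) (by norm_num) h
            exact add_le_add_left (mul_le_mul_of_nonneg_left this hA.le) c
    · have := hgtK k h
      have := mul_pos hA (pow_pos (show (0:ℝ) < 1/2 by norm_num) k)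
      linarith [hgtK k h]
  · rw [hK]; rw [mul_assoc, ← mul_pow]; norm_num
end

section
/- Let u : ℕ → ℝ with u ∈ Λ, and let (h,β) ∈ Γ(u) be decreasing from N ∈ ℕ with S(u,h) ∩ [N,∞) ≠ ∅ (usefully decreasing). Then: (1) the sequence (β_k^k)_{k∈ℕ} converges to 0 and is strictly decreasing for k ≥ N, i.e. β_{k+1}^{k+1} < β_k^k for all k ≥ N; (2) for all n ≥ N, L(u) ≤ h_n(0). -/
open Set Filter

/-!
For `k ≥ N` the bases `β k` lie in `(0,1)` and decrease, so `β k ^ k` is squeezed between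
`0` and `β N ^ k → 0`. For `k ≥ n ≥ N`, `u k ≤ h k (β k ^ k) ≤ h n (β k ^ k)`, and the
right-hand side tends to `h n 0` by continuity of `h n` at `0`, which bounds the limsup of `u`.
-/

open scoped Topology

theorem tendsto_pow_self_zero_of_antitoneOn {b : ℕ → ℝ} {N : ℕ} (hb0 : ∀ k, 0 ≤ b k)
    (hb : AntitoneOn b (Ici N)) (hbN : b N < 1) :
    Tendsto (fun k => b k ^ k) atTop (𝓝 0) := by
  refine tendsto_of_tendsto_of_tendsto_of_le_of_le' tendsto_const_nhds
    (tendsto_pow_atTop_nhds_zero_of_lt_one (hb0 N) hbN)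
    (.of_forall fun k => pow_nonneg (hb0 k) k) ?_
  filter_upwards [eventually_ge_atTop N] with k hk
  exact pow_le_pow_left₀ (hb0 k) (hb (mem_Ici.2 le_rfl) hk hk) k

theorem pow_succ_lt_pow_of_le {a b : ℝ} (k : ℕ) (ha : 0 ≤ a) (hab : a ≤ b) (hb0 : 0 < b)
    (hb1 : b < 1) : a ^ (k + 1) < b ^ k :=
  calc a ^ (k + 1) ≤ b ^ (k + 1) := pow_le_pow_left₀ ha hab _
    _ < b ^ k := pow_lt_pow_right_of_lt_one₀ hb0 hb1 k.lt_succ_self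

theorem limsup_coe_ereal_le_of_eventually_le_of_tendsto {α : Type*} {l : Filter α} [l.NeBot]
    {u v : α → ℝ} {c : ℝ} (huv : ∀ᶠ k in l, u k ≤ v k) (hv : Tendsto v l (𝓝 c)) :
    limsup (fun k => (u k : EReal)) l ≤ c := by
  rw [← ((continuous_coe_real_ereal.tendsto c).comp hv).limsup_eq]
  exact limsup_le_limsup (huv.mono fun k hk => EReal.coe_le_coe_iff.2 hk)

namespace DecreasingFrom

variable {h : ℕ → ℝ → ℝ} {β : ℕ → ℝ} {N : ℕ}

theorem antitoneOn_beta (hdec : DecreasingFrom h β N) : AntitoneOn β (Ici N) :=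
  antitoneOn_nat_Ici_of_succ_le fun n hn => (hdec n hn).2

theorem antitoneOn_apply (hdec : DecreasingFrom h β N) {x : ℝ} (hx : x ∈ Icc 0 1) :
    AntitoneOn (fun n => h n x) (Ici N) :=
  antitoneOn_nat_Ici_of_succ_le fun n hn => (hdec n hn).1 x hx

end DecreasingFrom

namespace InGamma

variable {u : ℕ → ℝ} {h : ℕ → ℝ → ℝ} {β : ℕ → ℝ}

theorem pow_mem_Icc (hΓ : InGamma u h β) (k : ℕ) : β k ^ k ∈ Icc 0 1 :=
  ⟨pow_nonneg (hΓ.2.1 k).1.le k, pow_le_one₀ (hΓ.2.1 k).1.le (hΓ.2.1 k).2.le⟩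

theorem eventually_le_apply_pow (hΓ : InGamma u h β) {N n : ℕ} (hdec : DecreasingFrom h β N)
    (hn : N ≤ n) : ∀ᶠ k in atTop, u k ≤ h n (β k ^ k) := by
  filter_upwards [eventually_ge_atTop n] with k hk
  exact (hΓ.2.2 k).trans (hdec.antitoneOn_apply (hΓ.pow_mem_Icc k) hn (hn.trans hk) hk)

end InGamma

theorem usefully_decreasing_properties_general (u : ℕ → ℝ)
    (h : ℕ → ℝ → ℝ) (β : ℕ → ℝ) (N : ℕ)
    (hΓ : InGamma u h β) (hdec : DecreasingFrom h β N) :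
    Filter.Tendsto (fun k : ℕ => β k ^ k) Filter.atTop (nhds 0) ∧
    (∀ k : ℕ, N ≤ k → β (k+1) ^ (k+1) < β k ^ k) ∧
    (∀ n : ℕ, N ≤ n → L u ≤ ((h n 0 : ℝ) : EReal)) := by
  have hβ := hΓ.2.1
  have hlim : Tendsto (fun k => β k ^ k) atTop (𝓝 0) :=
    tendsto_pow_self_zero_of_antitoneOn (fun k => (hβ k).1.le) hdec.antitoneOn_beta (hβ N).2
  refine ⟨hlim, fun k hk =>
    pow_succ_lt_pow_of_le k (hβ (k + 1)).1.le (hdec k hk).2 (hβ k).1 (hβ k).2, fun n hn => ?_⟩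
  have hcont : Tendsto (fun k => h n (β k ^ k)) atTop (𝓝 (h n 0)) :=
    ((hΓ.1 n).2 0 ⟨le_rfl, zero_le_one⟩).tendsto.comp
      (tendsto_nhdsWithin_of_tendsto_nhds_of_eventually_within _ hlim (.of_forall hΓ.pow_mem_Icc))
  exact limsup_coe_ereal_le_of_eventually_le_of_tendsto (hΓ.eventually_le_apply_pow hdec hn) hcont

/-- for u ∈ Λ and (h,β) ∈ Γ(u) usefully decreasing from N:
(β_k^k) tends to 0, is strictly decreasing from N, and L(u) ≤ h n 0 for n ≥ N. -/
theorem usefully_decreasing_properties (u : ℕ → ℝ) (hu : MemLambda u)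
    (h : ℕ → ℝ → ℝ) (β : ℕ → ℝ) (N : ℕ)
    (hΓ : InGamma u h β) (hdec : DecreasingFrom h β N)
    (husef : ∃ k : ℕ, N ≤ k ∧ h k 0 < u k) :
    Filter.Tendsto (fun k : ℕ => β k ^ k) Filter.atTop (nhds 0) ∧
    (∀ k : ℕ, N ≤ k → β (k+1) ^ (k+1) < β k ^ k) ∧
    (∀ n : ℕ, N ≤ n → L u ≤ ((h n 0 : ℝ) : EReal)) :=
  usefully_decreasing_properties_general u h β N hΓ hdec
end

section
/- Let u : ℕ → ℝ with u ∈ Λ. There exists k ∈ ℕ with u_k > L(u) if and only if there exists a pair (h,β) ∈ Γ(u) and N ∈ ℕ such that (h,β) is decreasing from N and S(u,h) ∩ [N,∞) ≠ ∅ (i.e. a usefully decreasing pair exists in Γ(u)). -/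
open Set Filter

/-- for u ∈ Λ, some term exceeds the limsup iff Γ(u) contains a usefully
decreasing pair. -/
theorem exists_gt_limsup_iff_usefully_decreasing (u : ℕ → ℝ) (hu : MemLambda u) :
    (∃ k : ℕ, L u < ((u k : ℝ) : EReal)) ↔
      ∃ (h : ℕ → ℝ → ℝ) (β : ℕ → ℝ) (N : ℕ), InGamma u h β ∧ DecreasingFrom h β N ∧
        ∃ k : ℕ, N ≤ k ∧ h k 0 < u k := by
  constructor
  · rintro ⟨k0, hk0⟩
    obtain ⟨x, hx1, hx2⟩ := exists_between hk0
    have hxbot : x ≠ ⊥ := (lt_of_le_of_lt bot_le hx1).ne'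
    have hxtop : x ≠ ⊤ := hx2.ne_top
    set a : ℝ := x.toReal with ha
    have hxa : x = (a : EReal) := (EReal.coe_toReal hxtop hxbot).symm
    rw [hxa] at hx1 hx2
    have hax : a < u k0 := EReal.coe_lt_coe_iff.mp hx2
    have hev : ∀ᶠ n in atTop, ((u n : ℝ) : EReal) < (a : EReal) :=
      Filter.eventually_lt_of_limsup_lt hx1
    obtain ⟨M, hM⟩ := Filter.eventually_atTop.mp hev
    have hM' : ∀ n, M ≤ n → u n < a := fun n hn => EReal.coe_lt_coe_iff.mp (hM n hn)
    have hk0M : k0 < M := by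
      by_contra hcon
      exact absurd (hM' k0 (le_of_not_gt hcon)) (not_lt.mpr hax.le)
    set T : Finset ℕ := (Finset.range M).filter (fun j => a ≤ u j) with hT
    have hk0T : k0 ∈ T := by
      simp only [hT, Finset.mem_filter, Finset.mem_range]
      exact ⟨hk0M, hax.le⟩
    obtain ⟨k, hkT, hkmax⟩ := T.exists_max_image u ⟨k0, hk0T⟩
    have hkM : k < M := Finset.mem_range.mp (Finset.mem_filter.mp hkT).1
    have hak' : a < u k := lt_of_lt_of_le hax (hkmax k0 hk0T)
    set C : ℝ := max a (u k - (1/2:ℝ)^M) with hC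
    have hCa : a ≤ C := le_max_left _ _
    have hCk : C < u k := by
      apply max_lt hak'
      have : (0:ℝ) < (1/2:ℝ)^M := by positivity
      linarith
    have key : ∀ j, k ≤ j → u j ≤ C + (1/2:ℝ)^j := by
      intro j hj
      by_cases hjM : j < M
      · by_cases haj : a ≤ u j
        · have hjT : j ∈ T := Finset.mem_filter.mpr ⟨Finset.mem_range.mpr hjM, haj⟩
          have h1 : u j ≤ u k := hkmax j hjT
          have h2 : (1/2:ℝ)^M ≤ (1/2:ℝ)^j :=
            pow_le_pow_of_le_one (by norm_num) (by norm_num) hjM.le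
          have h3 : u k - (1/2:ℝ)^M ≤ C := le_max_right _ _
          linarith
        · have h4 : u j < a := lt_of_not_ge haj
          have h5 : (0:ℝ) < (1/2:ℝ)^j := by positivity
          linarith
      · have h4 : u j < a := hM' j (le_of_not_gt hjM)
        have h5 : (0:ℝ) < (1/2:ℝ)^j := by positivity
        linarith
    refine ⟨fun j x => (if j < k then u j else C) + x, fun _ => 1/2, k,
      ⟨?_, ?_, ?_⟩, ?_, k, le_refl k, ?_⟩
    · intro j
      constructor
      · intro x _ y _ hxy
        exact add_lt_add_right hxy _
      · exact (continuous_const.add continuous_id).continuousOn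
    · intro j
      constructor <;> norm_num
    · intro j
      by_cases hjk : j < k
      · simp only [if_pos hjk]
        have h5 : (0:ℝ) < (1/2:ℝ)^j := by positivity
        linarith
      · simp only [if_neg hjk]
        exact key j (le_of_not_gt hjk)
    · intro n hn
      have h1 : ¬ n + 1 < k := by omega
      have h2 : ¬ n < k := by omega
      refine ⟨fun x _ => ?_, le_refl _⟩
      simp [h1, h2]
    · have h2 : ¬ k < k := lt_irrefl k
      simp only [if_neg h2, add_zero]
      exact hCk
  · rintro ⟨h, β, N, ⟨hΩ, hβ, hub⟩, hdec, k, hNk, hk⟩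
    refine ⟨k, ?_⟩
    have hmono : ∀ n, k ≤ n → ∀ x ∈ Set.Icc (0:ℝ) 1, h n x ≤ h k x := by
      intro n hn
      induction n, hn using Nat.le_induction with
      | base => exact fun x _ => le_refl _
      | succ n hn ih =>
        intro x hx
        exact le_trans ((hdec n (le_trans hNk hn)).1 x hx) (ih x hx)
    have hβmono : ∀ n, k ≤ n → β n ≤ β k := by
      intro n hn
      induction n, hn using Nat.le_induction with
      | base => exact le_refl _
      | succ n hn ih => exact le_trans (hdec n (le_trans hNk hn)).2 ih
    set ε : ℝ := (u k - h k 0) / 2 with hε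
    have hεpos : 0 < ε := by
      have := hk
      simp only [hε]
      linarith
    have hcont : ContinuousWithinAt (h k) (Set.Icc 0 1) 0 :=
      (hΩ k).2 0 ⟨le_refl 0, zero_le_one⟩
    obtain ⟨δ, hδpos, hδ⟩ := Metric.continuousWithinAt_iff.mp hcont ε hεpos
    have hβk01 : β k ∈ Set.Ioo (0:ℝ) 1 := hβ k
    have htend : Filter.Tendsto (fun n => (β k)^n) atTop (nhds 0) :=
      tendsto_pow_atTop_nhds_zero_of_lt_one hβk01.1.le hβk01.2
    have hevδ : ∀ᶠ n in atTop, (β k)^n < δ := htend.eventually_lt_const hδpos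
    have hbound : ∀ᶠ n in atTop, u n ≤ h k 0 + ε := by
      filter_upwards [hevδ, eventually_ge_atTop k] with n h1 h2
      have hβn := hβ n
      have hpow01 : β n ^ n ∈ Set.Icc (0:ℝ) 1 :=
        ⟨pow_nonneg hβn.1.le n, pow_le_one₀ hβn.1.le hβn.2.le⟩
      have hpow : β n ^ n ≤ β k ^ n := pow_le_pow_left₀ hβn.1.le (hβmono n h2) n
      have hlt : β n ^ n < δ := lt_of_le_of_lt hpow h1
      have hd : dist (β n ^ n) 0 < δ := by
        rw [Real.dist_eq, sub_zero, abs_of_nonneg hpow01.1]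
        exact hlt
      have h6 : dist (h k (β n ^ n)) (h k 0) < ε := hδ hpow01 hd
      have h5 : h k (β n ^ n) < h k 0 + ε := by
        rw [Real.dist_eq] at h6
        have := abs_lt.mp h6
        linarith [this.2]
      calc u n ≤ h n (β n ^ n) := hub n
        _ ≤ h k (β n ^ n) := hmono n h2 _ hpow01
        _ ≤ h k 0 + ε := h5.le
    have hL : L u ≤ ((h k 0 + ε : ℝ) : EReal) := by
      apply Filter.limsup_le_of_le (by isBoundedDefault)
      filter_upwards [hbound] with n hn
      exact EReal.coe_le_coe_iff.mpr hn
    have hfin : h k 0 + ε < u k := by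
      simp only [hε]
      linarith
    exact lt_of_le_of_lt hL (EReal.coe_lt_coe_iff.mpr hfin)
end

section
/- Let u : ℕ → ℝ, let (h,β) ∈ Γ(u) be decreasing from N ∈ ℕ, and let j, k ∈ S(u,h) with N ≤ j ≤ k. If u_j ≤ u_k, then F_u(k,h,β) ≤ F_u(j,h,β). -/
/-!
Since `h_k ≤ h_j` on `[0,1]`, we get `h_j x_j = u_j ≤ u_k = h_k x_k ≤ h_j x_k`, so `x_j ≤ x_k` by
strict monotonicity of `h_j`. The functional is `F_u(k,h,β) = log_{β_k} x_k`, and for bases in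
`(0,1)` and arguments in `(0,1]` the logarithm `log_b x` decreases both in `x` and in `b`;
together with `β_k ≤ β_j` this gives `log_{β_k} x_k ≤ log_{β_k} x_j ≤ log_{β_j} x_j`.
-/

open Set Filter

namespace Real

theorem logb_le_logb_of_base_le_of_le_one {a b x : ℝ} (ha : 0 < a) (hab : a ≤ b) (hb : b < 1)
    (hx : 0 < x) (hx₁ : x ≤ 1) : logb a x ≤ logb b x := by
  have hlogx : log x ≤ 0 := log_nonpos hx.le hx₁
  have hlogb : log b < 0 := log_neg (ha.trans_le hab) hb
  have hlogab : log a ≤ log b := log_le_log ha hab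
  rw [logb, logb, ← neg_div_neg_eq, ← neg_div_neg_eq (log x)]
  exact div_le_div_of_nonneg_left (neg_nonneg.2 hlogx) (neg_pos.2 hlogb) (neg_le_neg hlogab)

end Real

namespace DecreasingFrom

variable {h : ℕ → ℝ → ℝ} {β : ℕ → ℝ} {N j k : ℕ}

theorem apply_le_of_le (hdec : DecreasingFrom h β N) (hNj : N ≤ j) (hjk : j ≤ k) {x : ℝ}
    (hx : x ∈ Icc (0 : ℝ) 1) : h k x ≤ h j x :=
  antitoneOn_nat_Ici_of_succ_le (f := fun n ↦ h n x) (fun n hn ↦ (hdec n hn).1 x hx)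
    hNj (hNj.trans hjk) hjk

theorem base_le_of_le (hdec : DecreasingFrom h β N) (hNj : N ≤ j) (hjk : j ≤ k) : β k ≤ β j :=
  antitoneOn_nat_Ici_of_succ_le (fun n hn ↦ (hdec n hn).2) hNj (hNj.trans hjk) hjk

end DecreasingFrom

theorem upper_bound_functional_antitone_general (u : ℕ → ℝ) (h : ℕ → ℝ → ℝ) (β : ℕ → ℝ)
    (N : ℕ) (hΓ : InGamma u h β) (hdec : DecreasingFrom h β N)
    (j k : ℕ) (hNj : N ≤ j) (hjk : j ≤ k)
    (hujk : u j ≤ u k)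
    (xj : ℝ) (hxj : xj ∈ Set.Ioc (0:ℝ) 1) (hhxj : h j xj = u j)
    (xk : ℝ) (hxk : xk ∈ Set.Ioc (0:ℝ) 1) (hhxk : h k xk = u k) :
    Real.log xk / Real.log (β k) ≤ Real.log xj / Real.log (β j) := by
  obtain ⟨hΩ, hβ, -⟩ := hΓ
  have hxk_mem : xk ∈ Icc (0 : ℝ) 1 := Ioc_subset_Icc_self hxk
  have hxjk : xj ≤ xk := ((hΩ j).1.le_iff_le (Ioc_subset_Icc_self hxj) hxk_mem).1 <|
    calc h j xj = u j := hhxj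
      _ ≤ u k := hujk
      _ = h k xk := hhxk.symm
      _ ≤ h j xk := hdec.apply_le_of_le hNj hjk hxk_mem
  calc Real.logb (β k) xk ≤ Real.logb (β k) xj :=
        (Real.logb_le_logb_of_base_lt_one (hβ k).1 (hβ k).2 (hxj.1.trans_le hxjk) hxj.1).2 hxjk
    _ ≤ Real.logb (β j) xj :=
        Real.logb_le_logb_of_base_le_of_le_one (hβ k).1 (hdec.base_le_of_le hNj hjk) (hβ j).2
          hxj.1 hxj.2

/-- monotonicity of the upper bound functional: N ≤ j ≤ k, u j ≤ u k
implies F_u(k,h,β) ≤ F_u(j,h,β). -/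
theorem upper_bound_functional_antitone (u : ℕ → ℝ) (h : ℕ → ℝ → ℝ) (β : ℕ → ℝ)
    (N : ℕ) (hΓ : InGamma u h β) (hdec : DecreasingFrom h β N)
    (j k : ℕ) (hNj : N ≤ j) (hjk : j ≤ k)
    (hjS : h j 0 < u j) (hkS : h k 0 < u k) (hujk : u j ≤ u k)
    (xj : ℝ) (hxj : xj ∈ Set.Ioc (0:ℝ) 1) (hhxj : h j xj = u j)
    (xk : ℝ) (hxk : xk ∈ Set.Ioc (0:ℝ) 1) (hhxk : h k xk = u k) :
    Real.log xk / Real.log (β k) ≤ Real.log xj / Real.log (β j) :=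
  upper_bound_functional_antitone_general u h β N hΓ hdec j k hNj hjk hujk xj hxj hhxj xk hxk hhxk
end
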